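/- Let 0 < q < 1, let H = ℓ²(ℕ, ℂ) with its standard orthonormal basis (e_i)_{i≥0}, and let ρ : P(D_q) → B(H) be a unital algebra homomorphism into the bounded operators on H such that ρ(x) e_i = √(1 − q^{i+1}) e_{i+1} for all i ≥ 0 and ρ(x*) is the Hilbert-space adjoint of ρ(x). Then ρ is injective. -/
import Mathlib

noncomputable section

/-- The free algebra ℂ⟨x, x*⟩ on two generators (generator 0 is `x`, generator 1 is `x*`). -/
abbrev FreeDisc : Type := FreeAlgebra ℂ (Fin 2)

/-- The defining relation of the quantum disc: x* x = q x x* + (1 - q)·1. -/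
def discRel (q : ℝ) : FreeDisc → FreeDisc → Prop := fun a b =>
  a = FreeAlgebra.ι ℂ (1 : Fin 2) * FreeAlgebra.ι ℂ (0 : Fin 2) ∧
  b = (q : ℂ) • (FreeAlgebra.ι ℂ (0 : Fin 2) * FreeAlgebra.ι ℂ (1 : Fin 2)) +
      ((1 : ℂ) - (q : ℂ)) • 1

/-- The polynomial quantum disc algebra P(D_q). -/
abbrev QDisc (q : ℝ) : Type := RingQuot (discRel q)

/-- The generator x of P(D_q). -/
def xq (q : ℝ) : QDisc q := RingQuot.mkAlgHom ℂ (discRel q) (FreeAlgebra.ι ℂ 0)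

/-- The generator x* of P(D_q). -/
def xsq (q : ℝ) : QDisc q := RingQuot.mkAlgHom ℂ (discRel q) (FreeAlgebra.ι ℂ 1)

/-- The Hilbert space ℓ²(ℕ, ℂ). -/
abbrev ellTwo : Type := lp (fun _ : ℕ => ℂ) 2

/-- The standard orthonormal basis vectors of ℓ²(ℕ, ℂ). -/
def eStd (i : ℕ) : ellTwo := lp.single 2 i 1

/-- Square-root weight appearing in the shift representation. -/
def sc (q : ℝ) (n : ℕ) : ℂ := ((Real.sqrt (1 - q ^ n) : ℝ) : ℂ)

/-- Product of consecutive weights. -/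
def Wc (q : ℝ) (i n : ℕ) : ℂ := ∏ k ∈ Finset.range n, sc q (i + k + 1)

open Polynomial in
lemma polyFam_indep (H : ℕ → Polynomial ℂ)
    (hdeg : ∀ m, (H m).natDegree = m) (hlead : ∀ m, (H m).coeff m ≠ 0) :
    ∀ (n : ℕ) (s : Finset ℕ), s ⊆ Finset.range n → ∀ (c : ℕ → ℂ),
      (∑ m ∈ s, c m • H m) = 0 → ∀ m ∈ s, c m = 0 := by
  intro n
  induction n with
  | zero => intro s hs c _ m hm; simpa using hs hm
  | succ n ih =>
    intro s hs c hsum m hm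
    have hcn : n ∈ s → c n = 0 := by
      intro hn
      have h0 := congrArg (fun P => P.coeff n) hsum
      simp only [Polynomial.finset_sum_coeff, Polynomial.coeff_smul, Polynomial.coeff_zero,
        smul_eq_mul] at h0
      rw [Finset.sum_eq_single n] at h0
      · exact (mul_eq_zero.mp h0).resolve_right (hlead n)
      · intro b hb hbn
        have hblt : b < n :=
          lt_of_le_of_ne (Nat.lt_succ_iff.mp (Finset.mem_range.mp (hs hb))) hbn
        rw [Polynomial.coeff_eq_zero_of_natDegree_lt (by rw [hdeg]; exact hblt), mul_zero]
      · intro h; exact absurd hn h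
    by_cases hn : n ∈ s
    · have hc0 := hcn hn
      have hsub : s.erase n ⊆ Finset.range n := by
        intro b hb
        have := hs (Finset.mem_of_mem_erase hb)
        have := Finset.ne_of_mem_erase hb
        simp only [Finset.mem_range] at *
        omega
      have hsum' : (∑ m' ∈ s.erase n, c m' • H m') = 0 := by
        rw [Finset.sum_erase s (by rw [hc0, zero_smul])]
        exact hsum
      rcases eq_or_ne m n with rfl | hmn
      · exact hc0
      · exact ih _ hsub c hsum' m (Finset.mem_erase.mpr ⟨hmn, hm⟩)
    · have hsub : s ⊆ Finset.range n := by
        intro b hb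
        have := hs hb
        simp only [Finset.mem_range] at *
        rcases eq_or_ne b n with rfl | h
        · exact absurd hb hn
        · omega
      exact ih _ hsub c hsum m hm

lemma eStd_apply (n m : ℕ) : (eStd n : ∀ i : ℕ, ℂ) m = if m = n then 1 else 0 := by
  rcases eq_or_ne m n with rfl | h
  · rw [eStd, lp.single_apply_self, if_pos rfl]
  · rw [eStd, lp.single_apply_ne _ _ _ h, if_neg h]

open scoped InnerProductSpace in
lemma inner_eStd (j : ℕ) (v : ellTwo) : ⟪eStd j, v⟫_ℂ = (v : ∀ i : ℕ, ℂ) j := by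
  rw [eStd, lp.inner_single_left]
  simp [RCLike.inner_apply]

open scoped InnerProductSpace in
lemma adjoint_shift_apply (q : ℝ) (X : ellTwo →L[ℂ] ellTwo)
    (hx : ∀ i : ℕ, X (eStd i) = ((Real.sqrt (1 - q ^ (i + 1)) : ℝ) : ℂ) • eStd (i + 1)) :
    (ContinuousLinearMap.adjoint X) (eStd 0) = 0 ∧
    ∀ i : ℕ, (ContinuousLinearMap.adjoint X) (eStd (i + 1)) =
      ((Real.sqrt (1 - q ^ (i + 1)) : ℝ) : ℂ) • eStd i := by
  have key : ∀ n j : ℕ, ((ContinuousLinearMap.adjoint X) (eStd n) : ∀ i : ℕ, ℂ) j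
      = ((Real.sqrt (1 - q ^ (j + 1)) : ℝ) : ℂ) * (if j + 1 = n then 1 else 0) := by
    intro n j
    rw [← inner_eStd j, ContinuousLinearMap.adjoint_inner_right, hx j, inner_smul_left,
      inner_eStd, eStd_apply]
    simp
  constructor
  · apply lp.ext
    funext j
    rw [key 0 j]
    simp [lp.coeFn_zero]
  · intro i
    apply lp.ext
    funext j
    rw [key (i+1) j, lp.coeFn_smul, Pi.smul_apply, eStd_apply]
    rcases eq_or_ne j i with rfl | h
    · simp
    · simp [h, Nat.succ_ne_succ.mpr h]

lemma Xpow_apply (q : ℝ) (X : ellTwo →L[ℂ] ellTwo)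
    (hx : ∀ i : ℕ, X (eStd i) = sc q (i + 1) • eStd (i + 1)) :
    ∀ a i : ℕ, (X ^ a) (eStd i) = Wc q i a • eStd (i + a) := by
  intro a
  induction a with
  | zero => intro i; simp [Wc, ContinuousLinearMap.one_apply]
  | succ a ih =>
    intro i
    rw [pow_succ, ContinuousLinearMap.mul_apply, hx i, map_smul, ih (i + 1)]
    rw [smul_smul]
    congr 1
    · rw [Wc, Wc, Finset.prod_range_succ']
      rw [mul_comm]
      congr 1
      apply Finset.prod_congr rfl
      intro k _
      congr 1
      omega
    · congr 1
      omega

lemma Xspow_apply (q : ℝ) (Xs : ellTwo →L[ℂ] ellTwo)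
    (hxs : ∀ i : ℕ, Xs (eStd (i + 1)) = sc q (i + 1) • eStd i) :
    ∀ b i : ℕ, (Xs ^ b) (eStd (i + b)) = Wc q i b • eStd i := by
  intro b
  induction b with
  | zero => intro i; simp [Wc, ContinuousLinearMap.one_apply]
  | succ b ih =>
    intro i
    rw [pow_succ, ContinuousLinearMap.mul_apply]
    have h1 : i + (b + 1) = (i + b) + 1 := by omega
    rw [h1, hxs (i + b), map_smul, ih i, smul_smul]
    congr 1
    rw [Wc, Wc, Finset.prod_range_succ, mul_comm]

lemma qdisc_rel (q : ℝ) :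
    xsq q * xq q = (q : ℂ) • (xq q * xsq q) + ((1 : ℂ) - (q : ℂ)) • 1 := by
  have h := RingQuot.mkAlgHom_rel ℂ (s := discRel q)
    (x := FreeAlgebra.ι ℂ (1 : Fin 2) * FreeAlgebra.ι ℂ (0 : Fin 2))
    (y := (q : ℂ) • (FreeAlgebra.ι ℂ (0 : Fin 2) * FreeAlgebra.ι ℂ (1 : Fin 2)) +
      ((1 : ℂ) - (q : ℂ)) • 1) ⟨rfl, rfl⟩
  rw [map_mul, map_add, map_smul, map_smul, map_mul, map_one] at h
  exact h

lemma qdisc_comm (q : ℝ) : ∀ b : ℕ,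
    (xsq q) ^ (b + 1) * xq q =
      ((q : ℂ)) ^ (b + 1) • (xq q * (xsq q) ^ (b + 1)) +
      (1 - (q : ℂ) ^ (b + 1)) • (xsq q) ^ b := by
  intro b
  induction b with
  | zero => simpa using qdisc_rel q
  | succ b ih =>
    have h1 : (xsq q) ^ (b + 2) * xq q = (xsq q) ^ (b + 1) * (xsq q * xq q) := by
      rw [pow_succ, mul_assoc]
    rw [h1, qdisc_rel q, mul_add, mul_smul_comm, mul_smul_comm, mul_one,
      ← mul_assoc, ih]
    simp only [add_mul, smul_mul_assoc, mul_assoc, ← pow_succ]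
    match_scalars <;> ring

lemma qdisc_span (q : ℝ) (z : QDisc q) :
    z ∈ Submodule.span ℂ (Set.range fun p : ℕ × ℕ => xq q ^ p.1 * xsq q ^ p.2) := by
  set S := Submodule.span ℂ (Set.range fun p : ℕ × ℕ => xq q ^ p.1 * xsq q ^ p.2) with hS
  have hmono : ∀ a b : ℕ, xq q ^ a * xsq q ^ b ∈ S :=
    fun a b => Submodule.subset_span ⟨(a, b), rfl⟩
  have hSx : ∀ s ∈ S, s * xq q ∈ S := by
    intro s hs
    induction hs using Submodule.span_induction with
    | mem x h =>
      obtain ⟨⟨a, b⟩, rfl⟩ := h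
      match b with
      | 0 =>
        have : xq q ^ a * xsq q ^ 0 * xq q = xq q ^ (a + 1) * xsq q ^ 0 := by
          rw [pow_zero, mul_one, mul_one, pow_succ]
        rw [this]; exact hmono (a + 1) 0
      | Nat.succ b =>
        rw [mul_assoc, qdisc_comm q b, mul_add, mul_smul_comm, mul_smul_comm,
          ← mul_assoc, ← pow_succ]
        exact Submodule.add_mem _ (Submodule.smul_mem _ _ (hmono (a + 1) (b + 1)))
          (Submodule.smul_mem _ _ (hmono a b))
    | zero => simpa using Submodule.zero_mem S
    | add x y hx hy ihx ihy => rw [add_mul]; exact Submodule.add_mem _ ihx ihy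
    | smul r x hx ihx => rw [smul_mul_assoc]; exact Submodule.smul_mem _ _ ihx
  have hSxs : ∀ s ∈ S, s * xsq q ∈ S := by
    intro s hs
    induction hs using Submodule.span_induction with
    | mem x h =>
      obtain ⟨⟨a, b⟩, rfl⟩ := h
      rw [mul_assoc, ← pow_succ]
      exact hmono a (b + 1)
    | zero => simpa using Submodule.zero_mem S
    | add x y hx hy ihx ihy => rw [add_mul]; exact Submodule.add_mem _ ihx ihy
    | smul r x hx ihx => rw [smul_mul_assoc]; exact Submodule.smul_mem _ _ ihx
  have hmul : ∀ w : FreeDisc, ∀ s ∈ S, s * RingQuot.mkAlgHom ℂ (discRel q) w ∈ S := by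
    intro w
    induction w using FreeAlgebra.induction with
    | grade0 r =>
      intro s hs
      rw [AlgHom.commutes, ← Algebra.commutes, ← Algebra.smul_def]
      exact Submodule.smul_mem _ _ hs
    | grade1 i =>
      intro s hs
      fin_cases i
      · exact hSx s hs
      · exact hSxs s hs
    | mul u v ihu ihv =>
      intro s hs
      rw [map_mul, ← mul_assoc]
      exact ihv _ (ihu s hs)
    | add u v ihu ihv =>
      intro s hs
      rw [map_add, mul_add]
      exact Submodule.add_mem _ (ihu s hs) (ihv s hs)
  obtain ⟨w, hw⟩ := RingQuot.mkAlgHom_surjective ℂ (discRel q) z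
  have h1 : (1 : QDisc q) ∈ S := by simpa using hmono 0 0
  have := hmul w 1 h1
  rwa [one_mul, hw] at this

lemma coeffs_vanish (q : ℝ) (hq0 : 0 < q) (hq1 : q < 1)
    (X Xs : ellTwo →L[ℂ] ellTwo)
    (hx : ∀ i : ℕ, X (eStd i) = sc q (i + 1) • eStd (i + 1))
    (hxs : ∀ i : ℕ, Xs (eStd (i + 1)) = sc q (i + 1) • eStd i)
    (c : ℕ × ℕ →₀ ℂ)
    (hco : ∀ i n : ℕ,
      (∑ p ∈ c.support, c p * (((X ^ p.1 * Xs ^ p.2) (eStd i) : ∀ _ : ℕ, ℂ) n)) = 0) :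
    ∀ p : ℕ × ℕ, c p = 0 := by
  -- basic positivity facts
  have hq1' : ∀ n : ℕ, n ≠ 0 → 0 < 1 - q ^ n := by
    intro n hn
    have := pow_lt_one₀ (le_of_lt hq0) hq1 hn
    linarith
  have hsc : ∀ n : ℕ, n ≠ 0 → sc q n ≠ 0 := by
    intro n hn
    simp only [sc, ne_eq, Complex.ofReal_eq_zero]
    exact ne_of_gt (Real.sqrt_pos.mpr (hq1' n hn))
  set qc : ℂ := (q : ℂ) with hqc
  have hqc0 : qc ≠ 0 := by
    simp only [hqc, ne_eq, Complex.ofReal_eq_zero]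
    exact ne_of_gt hq0
  intro p0
  by_cases hp0 : p0 ∈ c.support
  swap
  · exact Finsupp.notMem_support_iff.mp hp0
  obtain ⟨a, b⟩ := p0
  set m₀ : ℕ := min a b with hm₀
  set N : ℕ := c.support.sup Prod.snd with hN
  -- the polynomial family
  set H : ℕ → Polynomial ℂ := fun m => ∏ k ∈ Finset.range m,
    (Polynomial.C (-(qc ^ ((m₀ : ℤ) + k + 1 - m))) * Polynomial.X + Polynomial.C 1) with hH
  have hr : ∀ m k : ℕ, (-(qc ^ ((m₀ : ℤ) + k + 1 - m))) ≠ 0 := by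
    intro m k
    exact neg_ne_zero.mpr (zpow_ne_zero _ hqc0)
  have hfac_ne : ∀ m k : ℕ,
      (Polynomial.C (-(qc ^ ((m₀ : ℤ) + k + 1 - m))) * Polynomial.X + Polynomial.C 1) ≠ 0 := by
    intro m k
    apply Polynomial.ne_zero_of_natDegree_gt (n := 0)
    rw [Polynomial.natDegree_linear (hr m k)]
    omega
  have hHdeg : ∀ m, (H m).natDegree = m := by
    intro m
    rw [hH, Polynomial.natDegree_prod _ _ fun k _ => hfac_ne m k]
    rw [Finset.sum_congr rfl fun k _ => Polynomial.natDegree_linear (hr m k)]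
    simp
  have hHlead : ∀ m, (H m).coeff m ≠ 0 := by
    intro m
    have : (H m).coeff m = (H m).leadingCoeff := by
      rw [Polynomial.leadingCoeff, hHdeg m]
    rw [this, hH, Polynomial.leadingCoeff_prod]
    rw [Finset.prod_congr rfl fun k _ => Polynomial.leadingCoeff_linear (hr m k)]
    exact Finset.prod_ne_zero_iff.mpr fun k _ => hr m k
  have hHeval : ∀ m i₀ j : ℕ, i₀ + m = j + m₀ →
      (H m).eval (qc ^ j) = ∏ k ∈ Finset.range m, (1 - qc ^ (i₀ + k + 1)) := by
    intro m i₀ j h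
    rw [hH, Polynomial.eval_prod]
    apply Finset.prod_congr rfl
    intro k hk
    have hk' : k < m := Finset.mem_range.mp hk
    simp only [Polynomial.eval_add, Polynomial.eval_mul, Polynomial.eval_C, Polynomial.eval_X,
      Polynomial.eval_one]
    have he : ((m₀ : ℤ) + k + 1 - m) + (j : ℤ) = ((i₀ + k + 1 : ℕ) : ℤ) := by push_cast; omega
    have h2 : qc ^ ((m₀ : ℤ) + k + 1 - m) * qc ^ (j : ℕ) = qc ^ (i₀ + k + 1) := by
      rw [← zpow_natCast qc j, ← zpow_add₀ hqc0, he, zpow_natCast]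
    rw [neg_mul, h2]
    ring
  -- the scalar prefactor
  set νr : ℕ → ℂ := fun j => ∏ r ∈ Finset.range (max a b - m₀), sc q (j + m₀ + r + 1) with hνr
  have hν : ∀ j, νr j ≠ 0 := by
    intro j
    rw [hνr]
    exact Finset.prod_ne_zero_iff.mpr fun r _ => hsc _ (by omega)
  -- the square root combination identity
  have hWW : ∀ p₁ p₂ i₀ j : ℕ, i₀ + min p₁ p₂ = j + m₀ → i₀ + max p₁ p₂ = j + max a b →
      Wc q i₀ p₂ * Wc q i₀ p₁ = νr j * (H (min p₁ p₂)).eval (qc ^ j) := by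
    intro p₁ p₂ i₀ j hmin hmax
    set m := min p₁ p₂ with hm
    set M := max p₁ p₂ with hM
    have step1 : Wc q i₀ p₂ * Wc q i₀ p₁ = Wc q i₀ m * Wc q i₀ M := by
      rcases le_total p₁ p₂ with h | h
      · rw [hm, hM, min_eq_left h, max_eq_right h, mul_comm]
      · rw [hm, hM, min_eq_right h, max_eq_left h]
    have step2 : Wc q i₀ M = Wc q i₀ m * ∏ k ∈ Finset.Ico m M, sc q (i₀ + k + 1) :=
      (Finset.prod_range_mul_prod_Ico _ (min_le_max)).symm
    have step3 : Wc q i₀ m * Wc q i₀ m = ∏ k ∈ Finset.range m, (1 - qc ^ (i₀ + k + 1)) := by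
      rw [Wc, ← Finset.prod_mul_distrib]
      apply Finset.prod_congr rfl
      intro k _
      rw [sc, ← Complex.ofReal_mul, Real.mul_self_sqrt (le_of_lt (hq1' _ (by omega)))]
      push_cast [hqc]
      ring
    have step4 : (∏ k ∈ Finset.Ico m M, sc q (i₀ + k + 1)) = νr j := by
      rw [Finset.prod_Ico_eq_prod_range, hνr]
      have hMm : M - m = max a b - m₀ := by omega
      rw [hMm]
      apply Finset.prod_congr rfl
      intro r _
      congr 1
      omega
    rw [step1, step2, ← mul_assoc, step3, step4, hHeval m i₀ j hmin, mul_comm]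
  -- per-term evaluation
  have hterm : ∀ j : ℕ, N ≤ j → ∀ p ∈ c.support,
      (((X ^ p.1 * Xs ^ p.2) (eStd (j + b)) : ∀ _ : ℕ, ℂ) (j + a)) =
      if p.1 + b = p.2 + a then νr j * (H (min p.1 p.2)).eval (qc ^ j) else 0 := by
    intro j hj p hp
    have hp2N : p.2 ≤ N := Finset.le_sup (f := Prod.snd) hp
    have hp2 : p.2 ≤ j + b := by omega
    set i₀ := j + b - p.2 with hi₀def
    have hi₀ : i₀ + p.2 = j + b := by omega
    have h1 : (Xs ^ p.2) (eStd (j + b)) = Wc q i₀ p.2 • eStd i₀ := by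
      rw [← hi₀]; exact Xspow_apply q Xs hxs p.2 i₀
    rw [ContinuousLinearMap.mul_apply, h1, map_smul, Xpow_apply q X hx p.1 i₀,
      lp.coeFn_smul, Pi.smul_apply, lp.coeFn_smul, Pi.smul_apply, eStd_apply]
    by_cases hd : p.1 + b = p.2 + a
    · have hidx : j + a = i₀ + p.1 := by omega
      rw [if_pos hidx, if_pos hd, ← hWW p.1 p.2 i₀ j (by omega) (by omega)]
      simp [smul_eq_mul]
    · have hidx : j + a ≠ i₀ + p.1 := by omega
      rw [if_neg hidx, if_neg hd]
      simp
  -- assemble into polynomial vanishing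
  set D : Finset (ℕ × ℕ) := c.support.filter (fun p => p.1 + b = p.2 + a) with hD
  set P : Polynomial ℂ := ∑ p ∈ D, c p • H (min p.1 p.2) with hP
  have hPj : ∀ j : ℕ, N ≤ j → P.eval (qc ^ j) = 0 := by
    intro j hj
    have h0 := hco (j + b) (j + a)
    rw [Finset.sum_congr rfl (fun p hp => by rw [hterm j hj p hp])] at h0
    simp only [mul_ite, mul_zero] at h0
    rw [← Finset.sum_filter, ← hD] at h0
    have : P.eval (qc ^ j) = ∑ p ∈ D, c p * (H (min p.1 p.2)).eval (qc ^ j) := by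
      rw [hP, Polynomial.eval_finset_sum]
      apply Finset.sum_congr rfl
      intro p _
      rw [Polynomial.eval_smul, smul_eq_mul]
    rw [this]
    have h1 : νr j * ∑ p ∈ D, c p * (H (min p.1 p.2)).eval (qc ^ j) = 0 := by
      rw [Finset.mul_sum, ← h0]
      apply Finset.sum_congr rfl
      intro p _
      ring
    exact (mul_eq_zero.mp h1).resolve_left (hν j)
  have hP0 : P = 0 := by
    apply Polynomial.eq_zero_of_infinite_isRoot
    refine Set.infinite_of_injective_forall_mem (f := fun k : ℕ => qc ^ (N + k)) ?_ ?_
    · intro k k' hkk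
      have h1 : (q : ℝ) ^ (N + k) = q ^ (N + k') := by
        have := hkk
        simp only [hqc, ← Complex.ofReal_pow] at this
        exact_mod_cast this
      have hsa : StrictAnti fun n : ℕ => q ^ n := fun m n h =>
        pow_lt_pow_right_of_lt_one₀ hq0 hq1 h
      have := hsa.injective h1
      omega
    · intro k
      exact hPj (N + k) (by omega)
  -- extract coefficients
  have hdiaginj : ∀ p ∈ D, ∀ p' ∈ D,
      (fun p : ℕ × ℕ => min p.1 p.2) p = (fun p : ℕ × ℕ => min p.1 p.2) p' → p = p' := by
    intro p hp p' hp'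
    rw [hD, Finset.mem_filter] at hp hp'
    intro h
    have h1 : p.1 + b = p.2 + a := by simpa using hp.2
    have h2 : p'.1 + b = p'.2 + a := by simpa using hp'.2
    simp only at h
    ext
    · omega
    · omega
  set s : Finset ℕ := D.image (fun p => min p.1 p.2) with hs
  set c' : ℕ → ℂ := fun m =>
    if b ≤ a then c (m + (a - b), m) else c (m, m + (b - a)) with hc'
  have hPs : P = ∑ m ∈ s, c' m • H m := by
    rw [hs, Finset.sum_image hdiaginj, hP]
    apply Finset.sum_congr rfl
    intro p hp
    rw [hD, Finset.mem_filter] at hp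
    have h1 : p.1 + b = p.2 + a := by simpa using hp.2
    rw [hc']
    simp only
    rcases le_or_gt b a with hba | hba
    · rw [if_pos hba]
      have : (min p.1 p.2 + (a - b), min p.1 p.2) = p := by
        have : min p.1 p.2 = p.2 := by omega
        rw [this]
        ext
        · simp only; omega
        · simp only
      rw [this]
    · rw [if_neg (by omega)]
      have : (min p.1 p.2, min p.1 p.2 + (b - a)) = p := by
        have : min p.1 p.2 = p.1 := by omega
        rw [this]
        ext
        · simp only
        · simp only; omega
      rw [this]
  have hsub : s ⊆ Finset.range (s.sup id + 1) := by
    intro m hm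
    rw [Finset.mem_range]
    have h := Finset.le_sup (f := id) hm
    simp only [id] at h
    omega
  have hall := polyFam_indep H hHdeg hHlead (s.sup id + 1) s hsub c' (by rw [← hPs, hP0])
  have habD : (a, b) ∈ D := by
    rw [hD, Finset.mem_filter]
    exact ⟨hp0, by omega⟩
  have habs : m₀ ∈ s := by
    rw [hs, Finset.mem_image]
    exact ⟨(a, b), habD, rfl⟩
  have hfin := hall m₀ habs
  rw [hc'] at hfin
  simp only at hfin
  rcases le_or_gt b a with hba | hba
  · rw [if_pos hba] at hfin
    have heq : (m₀ + (a - b), m₀) = (a, b) := by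
      ext
      · simp only; omega
      · simp only; omega
    rwa [heq] at hfin
  · rw [if_neg (by omega)] at hfin
    have heq : (m₀, m₀ + (b - a)) = (a, b) := by
      ext
      · simp only; omega
      · simp only; omega
    rwa [heq] at hfin


/-- For 0 < q < 1, any unital algebra homomorphism
ρ : P(D_q) → B(ℓ²(ℕ,ℂ)) with ρ(x) eᵢ = √(1 - q^{i+1}) e_{i+1} and ρ(x*) = ρ(x)* is
injective. -/
theorem qdisc_representation_faithful (q : ℝ) (hq0 : 0 < q) (hq1 : q < 1)
    (ρ : QDisc q →ₐ[ℂ] (ellTwo →L[ℂ] ellTwo))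
    (hx : ∀ i : ℕ, ρ (xq q) (eStd i) =
      ((Real.sqrt (1 - q ^ (i + 1)) : ℝ) : ℂ) • eStd (i + 1))
    (hadj : ρ (xsq q) = ContinuousLinearMap.adjoint (ρ (xq q))) :
    Function.Injective ρ := by
  rw [injective_iff_map_eq_zero]
  intro z hz
  set X := ρ (xq q) with hX
  set Xs := ρ (xsq q) with hXs
  have hx' : ∀ i : ℕ, X (eStd i) = sc q (i + 1) • eStd (i + 1) := hx
  have hadj2 := adjoint_shift_apply q X hx
  have hxs' : ∀ i : ℕ, Xs (eStd (i + 1)) = sc q (i + 1) • eStd i := by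
    intro i
    rw [hadj]
    exact hadj2.2 i
  have hzS := qdisc_span q z
  obtain ⟨c, hc⟩ := Finsupp.mem_span_range_iff_exists_finsupp.mp hzS
  have hρz : (∑ p ∈ c.support, c p • (X ^ p.1 * Xs ^ p.2)) = 0 := by
    rw [← hz, ← hc, Finsupp.sum, map_sum]
    exact Finset.sum_congr rfl fun p _ => by rw [map_smul, map_mul, map_pow, map_pow]
  have hco : ∀ i n : ℕ,
      (∑ p ∈ c.support, c p * (((X ^ p.1 * Xs ^ p.2) (eStd i) : ∀ _ : ℕ, ℂ) n)) = 0 := by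
    intro i n
    have h1 := congrArg
      (fun T : ellTwo →L[ℂ] ellTwo => ((T (eStd i) : ∀ _ : ℕ, ℂ) n)) hρz
    simp only [ContinuousLinearMap.sum_apply, ContinuousLinearMap.smul_apply,
      ContinuousLinearMap.zero_apply, lp.coeFn_sum, Finset.sum_apply, lp.coeFn_smul,
      Pi.smul_apply, smul_eq_mul, lp.coeFn_zero, Pi.zero_apply] at h1
    exact h1
  have hcz := coeffs_vanish q hq0 hq1 X Xs hx' hxs' c hco
  have hc0 : c = 0 := Finsupp.ext hcz
  rw [← hc, hc0, Finsupp.sum_zero_index]
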